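/- arXiv:1812.01961 — 3 statements merged into one kernel-verified Lean document; each statement's English description precedes it below -/
import Mathlib

section
/- Every finite graph G with e edges admits a partition of its vertex set into two parts whose sizes differ by at most 1, such that the number of edges crossing the partition is at least e/2. -/
open Finset

private lemma middle_eq (m : ℕ) : Nat.choose m ((m+1)/2) = Nat.choose m (m/2) := by
  rcases Nat.even_or_odd m with h | h
  · obtain ⟨t, rfl⟩ := h
    congr 1; omega
  · obtain ⟨t, rfl⟩ := h
    have h1 : (2*t+1+1)/2 ≤ 2*t+1 := by omega
    have h2 := Nat.choose_symm h1
    have h3 : (2*t+1) - (2*t+1+1)/2 = (2*t+1)/2 := by omega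
    rw [h3] at h2
    rw [← h2]

private lemma choose_ineq (n : ℕ) :
    Nat.choose n ((n+1)/2) ≤ 4 * Nat.choose (n-2) ((n+1)/2 - 1) := by
  match n with
  | 0 => decide
  | 1 => decide
  | 2 => decide
  | (m+3) =>
    set M := m + 1 with hM
    have h1 : (m+3+1)/2 = (M+1)/2 + 1 := by omega
    have h2 : (m+3+1)/2 - 1 = (M+1)/2 := by omega
    have h3 : m + 3 - 2 = M := by omega
    rw [h1, h3, Nat.add_sub_cancel]
    show Nat.choose (M+2) ((M+1)/2 + 1) ≤ 4 * Nat.choose M ((M+1)/2)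
    obtain ⟨i, hi⟩ : ∃ i, (M+1)/2 = i + 1 := ⟨(M+1)/2 - 1, by omega⟩
    rw [hi]
    have pas : Nat.choose (M+2) (i+1+1)
        = Nat.choose M i + Nat.choose M (i+1) + (Nat.choose M (i+1) + Nat.choose M (i+2)) := by
      rw [Nat.choose_succ_succ (M+1) (i+1), Nat.choose_succ_succ M i, Nat.choose_succ_succ M (i+1)]
    have hmid : Nat.choose M (i+1) = Nat.choose M (M/2) := by
      rw [← hi, middle_eq]
    have b1 : Nat.choose M i ≤ Nat.choose M (i+1) := by
      rw [hmid]; exact Nat.choose_le_middle i M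
    have b2 : Nat.choose M (i+2) ≤ Nat.choose M (i+1) := by
      rw [hmid]; exact Nat.choose_le_middle (i+2) M
    omega

private lemma count_sep {V : Type*} [Fintype V] [DecidableEq V] (k : ℕ) (hk : 1 ≤ k)
    (a b : V) (hab : a ≠ b) :
    ((((univ : Finset V)).powersetCard k).filter fun S => a ∈ S ∧ b ∉ S).card
      = Nat.choose (Fintype.card V - 2) (k - 1) := by
  have hcard : (((univ : Finset V).erase a).erase b).card = Fintype.card V - 2 := by
    rw [card_erase_of_mem (by simp [mem_erase, hab.symm]), card_erase_of_mem (mem_univ a),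
      card_univ]
    omega
  rw [← hcard, ← card_powersetCard]
  refine Finset.card_bij' (fun S _ => S.erase a) (fun T _ => insert a T) ?_ ?_ ?_ ?_
  · intro S hS
    simp only [mem_filter, mem_powersetCard] at hS
    obtain ⟨⟨-, hSk⟩, haS, hbS⟩ := hS
    rw [mem_powersetCard]
    constructor
    · intro x hx
      simp only [mem_erase] at hx ⊢
      exact ⟨fun hxb => hbS (hxb ▸ hx.2), hx.1, mem_univ x⟩
    · rw [card_erase_of_mem haS, hSk]
  · intro T hT
    rw [mem_powersetCard] at hT
    obtain ⟨hTsub, hTk⟩ := hT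
    have haT : a ∉ T := fun h => by simpa using (hTsub h)
    simp only [mem_filter, mem_powersetCard]
    refine ⟨⟨subset_univ _, ?_⟩, mem_insert_self a T, ?_⟩
    · rw [card_insert_of_notMem haT, hTk]; omega
    · simp only [mem_insert, not_or]
      exact ⟨hab.symm, fun h => by simpa [hab.symm] using hTsub h⟩
  · intro S hS
    simp only [mem_filter] at hS
    exact insert_erase hS.2.1
  · intro T hT
    rw [mem_powersetCard] at hT
    have haT : a ∉ T := fun h => by simpa using (hT.1 h)
    exact erase_insert haT

/-- The number of edges of `G` with one endpoint in `A` and the other in `B`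
(for disjoint `A`, `B` this counts each crossing edge exactly once). -/
def eBetween {V : Type*} [DecidableEq V] (G : SimpleGraph V) [DecidableRel G.Adj]
    (A B : Finset V) : ℕ :=
  ((A ×ˢ B).filter fun p => G.Adj p.1 p.2).card

/-- Every finite graph with `e` edges admits a nearly balanced vertex partition
`(S, Sᶜ)` (sizes differing by at most 1) with at least `e/2` crossing edges. -/
theorem stmt_0 {V : Type*} [Fintype V] [DecidableEq V]
    (G : SimpleGraph V) [DecidableRel G.Adj] :
    ∃ S : Finset V, |(S.card : ℤ) - (Sᶜ.card : ℤ)| ≤ 1 ∧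
      (G.edgeFinset.card : ℝ) / 2 ≤ eBetween G S Sᶜ := by
  classical
  set n := Fintype.card V with hn
  set k := (n+1)/2 with hk
  set 𝒮 := (univ : Finset V).powersetCard k with h𝒮
  have hcard𝒮 : 𝒮.card = Nat.choose n k := by
    rw [h𝒮, card_powersetCard, card_univ]
  have hkn : k ≤ n := by omega
  have hCpos : 0 < Nat.choose n k := Nat.choose_pos hkn
  have hne : 𝒮.Nonempty := card_pos.mp (by rw [hcard𝒮]; exact hCpos)
  set P := (univ : Finset (V × V)).filter (fun p => G.Adj p.1 p.2) with hP
  have hPcard : P.card = 2 * G.edgeFinset.card := by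
    rw [SimpleGraph.two_mul_card_edgeFinset]
  -- each eBetween as a sum over P
  have step1 : ∀ S : Finset V, eBetween G S Sᶜ
      = ∑ p ∈ P, if p.1 ∈ S ∧ p.2 ∉ S then 1 else 0 := by
    intro S
    rw [← Finset.card_filter, eBetween]
    congr 1
    ext p
    simp only [hP, mem_filter, mem_product, mem_compl, mem_univ, true_and]
    tauto
  have key : ∑ S ∈ 𝒮, eBetween G S Sᶜ
      = 2 * G.edgeFinset.card * Nat.choose (n-2) (k-1) := by
    calc ∑ S ∈ 𝒮, eBetween G S Sᶜ
        = ∑ S ∈ 𝒮, ∑ p ∈ P, if p.1 ∈ S ∧ p.2 ∉ S then 1 else 0 := by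
          exact Finset.sum_congr rfl fun S _ => step1 S
      _ = ∑ p ∈ P, ∑ S ∈ 𝒮, if p.1 ∈ S ∧ p.2 ∉ S then 1 else 0 := Finset.sum_comm
      _ = ∑ p ∈ P, Nat.choose (n-2) (k-1) := by
          refine Finset.sum_congr rfl fun p hp => ?_
          rw [← Finset.card_filter]
          have hadj : G.Adj p.1 p.2 := by
            rw [hP] at hp; exact (mem_filter.mp hp).2
          have hab : p.1 ≠ p.2 := G.ne_of_adj hadj
          have hn2 : 1 < n := by
            rw [hn]; exact Fintype.one_lt_card_iff.mpr ⟨p.1, p.2, hab⟩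
          exact count_sep k (by omega) p.1 p.2 hab
      _ = P.card * Nat.choose (n-2) (k-1) := by rw [Finset.sum_const, smul_eq_mul]
      _ = 2 * G.edgeFinset.card * Nat.choose (n-2) (k-1) := by rw [hPcard]
  have hchoose : Nat.choose n k ≤ 4 * Nat.choose (n-2) (k-1) := choose_ineq n
  -- averaging
  have havg : ∑ S ∈ 𝒮, G.edgeFinset.card * Nat.choose n k
      ≤ ∑ S ∈ 𝒮, 2 * Nat.choose n k * eBetween G S Sᶜ := by
    rw [Finset.sum_const, smul_eq_mul, hcard𝒮, ← Finset.mul_sum, key]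
    calc Nat.choose n k * (G.edgeFinset.card * Nat.choose n k)
        ≤ Nat.choose n k * (G.edgeFinset.card * (4 * Nat.choose (n-2) (k-1))) := by
          exact Nat.mul_le_mul_left _ (Nat.mul_le_mul_left _ hchoose)
      _ = 2 * Nat.choose n k * (2 * G.edgeFinset.card * Nat.choose (n-2) (k-1)) := by ring
  obtain ⟨S, hS𝒮, hle⟩ := Finset.exists_le_of_sum_le hne havg
  refine ⟨S, ?_, ?_⟩
  · have hScard : S.card = k := (mem_powersetCard.mp hS𝒮).2
    rw [card_compl, hScard, ← hn]
    rw [abs_le]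
    constructor <;> push_cast <;> omega
  · have h2 : G.edgeFinset.card * Nat.choose n k ≤ (2 * eBetween G S Sᶜ) * Nat.choose n k := by
      calc G.edgeFinset.card * Nat.choose n k ≤ 2 * Nat.choose n k * eBetween G S Sᶜ := hle
        _ = (2 * eBetween G S Sᶜ) * Nat.choose n k := by ring
    have h3 : G.edgeFinset.card ≤ 2 * eBetween G S Sᶜ := Nat.le_of_mul_le_mul_right h2 hCpos
    rw [div_le_iff₀ (by norm_num : (0:ℝ) < 2)]
    exact_mod_cast (by omega : G.edgeFinset.card ≤ eBetween G S Sᶜ * 2)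
end

section
/- Let ε > 0 and let G be a connected graph with n vertices and maximum degree at most d ≥ 2. Suppose the restricted Cheeger constant satisfies h_{εn}(G) > 1. Then for every integer s with 1 ≤ s ≤ εn/(2d) and every vertex v ∈ V(G), there exists a connected subset X ⊆ V(G) with |X| = s, v ∈ X, and |N(X)| ≥ |X|·(h_{εn}(G) − 1). -/
open Finset

/-- The external neighbourhood of a set `X`. -/
def extNbhd {V : Type*} [Fintype V] [DecidableEq V] (G : SimpleGraph V)
    [DecidableRel G.Adj] (X : Finset V) : Finset V :=
  univ.filter fun v => v ∉ X ∧ ∃ u ∈ X, G.Adj u v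

/-- The restricted Cheeger constant `h_k(G) = min{e(S, V\S)/|S| : 0 < |S| ≤ k}`. -/
noncomputable def rCheeger {V : Type*} [Fintype V] [DecidableEq V] (G : SimpleGraph V)
    [DecidableRel G.Adj] (k : ℝ) : ℝ :=
  sInf {x : ℝ | ∃ S : Finset V, S.Nonempty ∧ (S.card : ℝ) ≤ k ∧
    x = (eBetween G S Sᶜ : ℝ) / S.card}

/-!
Grow `X` greedily from `{v}`, keeping `|N(X)| ≥ |X| (h - 1)` where `h = h_k(G)`.
While `|X| < s`, the set `Y = X ∪ N(X)` has at most `(d + 1)|X| ≤ k` vertices, so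
`e(Y, Yᶜ) ≥ h |Y| ≥ h |N(X)|`. Only vertices of `N(X)` send edges out of `Y`, so some
`u ∈ N(X)` has at least `h` neighbours outside `Y`. Moving `u` into `X` keeps `X` connected,
loses `u` from the boundary and gains those neighbours, so `|N(X)|` grows by at least `h - 1`.
-/

lemma SimpleGraph.connected_induce_insert {V : Type*} {G : SimpleGraph V} {X : Set V}
    (hX : (G.induce X).Connected) {x u : V} (hx : x ∈ X) (hadj : G.Adj x u) :
    (G.induce (insert u X)).Connected := by
  have hu : (G.induce {u}).Preconnected := by
    rw [induce_singleton_eq_top]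
    exact preconnected_top
  rw [← Set.union_singleton]
  exact connected_induce_union hX.preconnected hu hx rfl hadj

section
variable {V : Type*} [DecidableEq V] (G : SimpleGraph V) [DecidableRel G.Adj]

lemma eBetween_eq_sum (A B : Finset V) :
    eBetween G A B = ∑ a ∈ A, #(B.filter (G.Adj a)) := by
  rw [eBetween, card_filter, sum_product]
  exact sum_congr rfl fun a _ => (card_filter _ _).symm

variable [Fintype V]

lemma mem_extNbhd {X : Finset V} {u : V} :
    u ∈ extNbhd G X ↔ u ∉ X ∧ ∃ x ∈ X, G.Adj x u := by
  simp [extNbhd]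

lemma disjoint_extNbhd (X : Finset V) : Disjoint X (extNbhd G X) :=
  disjoint_left.2 fun _ hX hN => ((mem_extNbhd G).1 hN).1 hX

lemma card_extNbhd_le {d : ℕ} (hdeg : ∀ v : V, G.degree v ≤ d) (X : Finset V) :
    #(extNbhd G X) ≤ d * #X := by
  have hsub : extNbhd G X ⊆ X.biUnion fun x => G.neighborFinset x := by
    intro u hu
    obtain ⟨-, x, hx, hadj⟩ := (mem_extNbhd G).1 hu
    exact mem_biUnion.2 ⟨x, hx, (G.mem_neighborFinset x u).2 hadj⟩
  calc #(extNbhd G X) ≤ #(X.biUnion fun x => G.neighborFinset x) := card_le_card hsub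
    _ ≤ ∑ x ∈ X, #(G.neighborFinset x) := card_biUnion_le
    _ ≤ ∑ _x ∈ X, d :=
      sum_le_sum fun x _ => (G.card_neighborFinset_eq_degree x).trans_le (hdeg x)
    _ = d * #X := by rw [sum_const, smul_eq_mul, mul_comm]

lemma eBetween_singleton_compl (v : V) : eBetween G {v} {v}ᶜ = #(extNbhd G {v}) := by
  rw [eBetween_eq_sum, sum_singleton]
  congr 1
  ext u
  simp [mem_extNbhd]

lemma rCheeger_mul_card_le (k : ℝ) {S : Finset V} (hS : S.Nonempty) (hSk : (#S : ℝ) ≤ k) :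
    rCheeger G k * #S ≤ eBetween G S Sᶜ := by
  have hbdd : BddBelow {x : ℝ | ∃ S : Finset V, S.Nonempty ∧ (#S : ℝ) ≤ k ∧
      x = (eBetween G S Sᶜ : ℝ) / #S} := ⟨0, by rintro x ⟨T, -, -, rfl⟩; positivity⟩
  have hS' : (0 : ℝ) < #S := by exact_mod_cast hS.card_pos
  rw [← le_div_iff₀ hS']
  exact csInf_le hbdd ⟨S, hS, hSk, rfl⟩

lemma eBetween_union_extNbhd (X : Finset V) :
    eBetween G (X ∪ extNbhd G X) (X ∪ extNbhd G X)ᶜ =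
      ∑ u ∈ extNbhd G X, #((X ∪ extNbhd G X)ᶜ.filter (G.Adj u)) := by
  rw [eBetween_eq_sum, sum_union (disjoint_extNbhd G X), add_eq_right]
  refine sum_eq_zero fun x hx => card_eq_zero.2 (filter_eq_empty_iff.2 fun w hw hadj => ?_)
  simp only [mem_compl, mem_union, not_or] at hw
  exact hw.2 ((mem_extNbhd G).2 ⟨hw.1, x, hx, hadj⟩)

lemma card_extNbhd_insert {X : Finset V} {u : V} (hu : u ∈ extNbhd G X) :
    #(extNbhd G X) + #((X ∪ extNbhd G X)ᶜ.filter (G.Adj u)) ≤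
      #(extNbhd G (insert u X)) + 1 := by
  have hsub : (extNbhd G X).erase u ∪ (X ∪ extNbhd G X)ᶜ.filter (G.Adj u) ⊆
      extNbhd G (insert u X) := by
    intro w hw
    simp only [mem_union, mem_erase, mem_filter, mem_compl, not_or] at hw
    rw [mem_extNbhd, mem_insert, not_or]
    rcases hw with ⟨hwu, hw⟩ | ⟨⟨hwX, hwN⟩, hadj⟩
    · obtain ⟨hwX, x, hx, hadj⟩ := (mem_extNbhd G).1 hw
      exact ⟨⟨hwu, hwX⟩, x, mem_insert_of_mem hx, hadj⟩
    · exact ⟨⟨fun h => hwN (h ▸ hu), hwX⟩, u, mem_insert_self u X, hadj⟩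
  have hdisj : Disjoint ((extNbhd G X).erase u) ((X ∪ extNbhd G X)ᶜ.filter (G.Adj u)) :=
    disjoint_left.2 fun w hw hw' =>
      mem_compl.1 (mem_filter.1 hw').1 (mem_union_right X (mem_of_mem_erase hw))
  have hle := card_le_card hsub
  rw [card_union_of_disjoint hdisj, card_erase_of_mem hu] at hle
  have hN := card_pos.2 ⟨u, hu⟩
  omega

lemma exists_card_extNbhd_insert_ge (k : ℝ) (hh : 0 < rCheeger G k) {X : Finset V}
    (hX : X.Nonempty) (hk : (#X + #(extNbhd G X) : ℝ) ≤ k) :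
    ∃ u ∈ extNbhd G X,
      (#(extNbhd G X) : ℝ) - 1 + rCheeger G k ≤ #(extNbhd G (insert u X)) := by
  set N := extNbhd G X
  set Y := X ∪ N
  have hYcard : (#Y : ℝ) = #X + #N := by
    rw [card_union_of_disjoint (disjoint_extNbhd G X)]; push_cast; rfl
  have hY := rCheeger_mul_card_le G k (hX.mono subset_union_left) (hYcard ▸ hk)
  rw [eBetween_union_extNbhd, Nat.cast_sum] at hY
  have hYpos : 0 < rCheeger G k * #Y :=
    mul_pos hh (by exact_mod_cast (hX.mono subset_union_left).card_pos)
  have hN : N.Nonempty := nonempty_of_sum_ne_zero (hYpos.trans_le hY).ne'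
  have hsum : ∑ _u ∈ N, rCheeger G k ≤ ∑ u ∈ N, (#(Yᶜ.filter (G.Adj u)) : ℝ) := by
    rw [sum_const, nsmul_eq_mul]
    nlinarith [hYcard]
  obtain ⟨u, hu, hcu⟩ := exists_le_of_sum_le hN hsum
  refine ⟨u, hu, ?_⟩
  have hgain : (#N : ℝ) + #(Yᶜ.filter (G.Adj u)) ≤ #(extNbhd G (insert u X)) + 1 := by
    exact_mod_cast card_extNbhd_insert G hu
  linarith

lemma exists_connected_card_extNbhd_ge (k : ℝ) {d : ℕ} (hdeg : ∀ v : V, G.degree v ≤ d)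
    (hh : 1 < rCheeger G k) (v : V) {s : ℕ} (hsk : (s : ℝ) * (d + 1) ≤ k) {j : ℕ}
    (hj : 1 ≤ j) (hjs : j ≤ s) :
    ∃ X : Finset V, v ∈ X ∧ #X = j ∧ (G.induce (X : Set V)).Connected ∧
      (j : ℝ) * (rCheeger G k - 1) ≤ #(extNbhd G X) := by
  induction j, hj using Nat.le_induction with
  | base =>
    refine ⟨{v}, mem_singleton_self v, card_singleton v, ?_, ?_⟩
    · rw [coe_singleton, SimpleGraph.induce_singleton_eq_top]
      exact SimpleGraph.connected_top
    · have h1k : ((#{v} : ℕ) : ℝ) ≤ k := by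
        have : (1 : ℝ) ≤ s := by exact_mod_cast (by omega : 1 ≤ s)
        rw [card_singleton, Nat.cast_one]; nlinarith
      have := rCheeger_mul_card_le G k (singleton_nonempty v) h1k
      rw [eBetween_singleton_compl, card_singleton, Nat.cast_one] at this
      push_cast
      linarith
  | succ j _ ih =>
    obtain ⟨X, hvX, rfl, hconn, hX⟩ := ih (by omega)
    have hXk : (#X + #(extNbhd G X) : ℝ) ≤ k := by
      have hN : (#(extNbhd G X) : ℝ) ≤ d * #X := by exact_mod_cast card_extNbhd_le G hdeg X
      have : (#X : ℝ) ≤ s := by exact_mod_cast (by omega : #X ≤ s)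
      nlinarith
    obtain ⟨u, hu, hgain⟩ := exists_card_extNbhd_insert_ge G k (by linarith) ⟨v, hvX⟩ hXk
    obtain ⟨huX, x, hx, hadj⟩ := (mem_extNbhd G).1 hu
    refine ⟨insert u X, mem_insert_of_mem hvX, card_insert_of_notMem huX, ?_, ?_⟩
    · rw [coe_insert]
      exact SimpleGraph.connected_induce_insert hconn hx hadj
    · push_cast
      linarith

end

theorem stmt_3_general {V : Type*} [Fintype V] [DecidableEq V]
    (G : SimpleGraph V) [DecidableRel G.Adj]
    (ε : ℝ) (d : ℕ) (hd : 2 ≤ d) (hdeg : ∀ v : V, G.degree v ≤ d)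
    (hch : 1 < rCheeger G (ε * Fintype.card V))
    (s : ℕ) (hs1 : 1 ≤ s) (hs2 : (s : ℝ) ≤ ε * Fintype.card V / (2 * d)) (v : V) :
    ∃ X : Finset V, v ∈ X ∧ X.card = s ∧ (G.induce (X : Set V)).Connected ∧
      (s : ℝ) * (rCheeger G (ε * Fintype.card V) - 1) ≤ ((extNbhd G X).card : ℝ) := by
  have hd' : (2 : ℝ) ≤ d := by exact_mod_cast hd
  have hsk : (s : ℝ) * (d + 1) ≤ ε * Fintype.card V := by
    have := (le_div_iff₀ (by positivity)).1 hs2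
    nlinarith [s.cast_nonneg (α := ℝ)]
  exact exists_connected_card_extNbhd_ge G _ hdeg hch v hsk hs1 le_rfl

/-- If `G` is connected with maximum degree at most `d ≥ 2` and `h_{εn}(G) > 1`,
then for every `1 ≤ s ≤ εn/(2d)` and every vertex `v` there is a connected set `X`
of size `s` containing `v` with `|N(X)| ≥ |X|(h_{εn}(G) − 1)`. -/
theorem stmt_3 {V : Type*} [Fintype V] [DecidableEq V]
    (G : SimpleGraph V) [DecidableRel G.Adj] (hG : G.Connected)
    (ε : ℝ) (hε : 0 < ε) (d : ℕ) (hd : 2 ≤ d) (hdeg : ∀ v : V, G.degree v ≤ d)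
    (hch : 1 < rCheeger G (ε * Fintype.card V))
    (s : ℕ) (hs1 : 1 ≤ s) (hs2 : (s : ℝ) ≤ ε * Fintype.card V / (2 * d)) (v : V) :
    ∃ X : Finset V, v ∈ X ∧ X.card = s ∧ (G.induce (X : Set V)).Connected ∧
      (s : ℝ) * (rCheeger G (ε * Fintype.card V) - 1) ≤ ((extNbhd G X).card : ℝ) :=
  stmt_3_general G ε d hd hdeg hch s hs1 hs2 v
end

section
/- The complete bipartite graph K_{m,n} with parts of sizes m < n does not contain a complete minor of order m + 2; that is, ccl(K_{m,n}) ≤ m + 1. -/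
open Finset

/-- The complete bipartite graph `K_{m,n}` with `m < n` contains no `K_{m+2}` minor:
there is no family of `m + 2` pairwise disjoint nonempty connected subsets with an
edge between every pair. Hence `ccl(K_{m,n}) ≤ m + 1`. -/
theorem stmt_9 (m n : ℕ) (hmn : m < n) :
    ¬ ∃ T : Fin (m + 2) → Finset (Fin m ⊕ Fin n),
      (∀ i, (T i).Nonempty) ∧
      (∀ i, ((completeBipartiteGraph (Fin m) (Fin n)).induce
        ((T i : Finset (Fin m ⊕ Fin n)) : Set (Fin m ⊕ Fin n))).Connected) ∧
      (∀ i j, i ≠ j → Disjoint (T i) (T j)) ∧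
      (∀ i j, i ≠ j → ∃ a ∈ T i, ∃ b ∈ T j,
        (completeBipartiteGraph (Fin m) (Fin n)).Adj a b) := by
  rintro ⟨T, hne, hconn, hdisj, hadj⟩
  classical
  set s : Finset (Fin (m+2)) :=
    Finset.univ.filter (fun i => ∃ a : Fin m, Sum.inl a ∈ T i) with hs
  have hsc : sᶜ.card ≤ 1 := by
    refine Finset.card_le_one.mpr ?_
    intro i hi j hj
    by_contra hij
    obtain ⟨a, ha, b, hb, hab⟩ := hadj i j hij
    simp only [hs, Finset.mem_compl, Finset.mem_filter, Finset.mem_univ, true_and,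
      not_exists] at hi hj
    cases a with
    | inl a => exact hi a ha
    | inr a =>
      cases b with
      | inl b => exact hj b hb
      | inr b => simp at hab
  have hcard : m + 1 ≤ s.card := by
    have h1 : sᶜ.card + s.card = m + 2 := by
      rw [Finset.card_compl_add_card]; simp
    omega
  have hn : 0 < n := by omega
  let f : Fin (m+2) → Fin m ⊕ Fin n := fun i =>
    if h : ∃ a : Fin m, Sum.inl a ∈ T i then Sum.inl h.choose else Sum.inr ⟨0, hn⟩
  have hmaps : ∀ i ∈ s, f i ∈ Finset.univ.image (Sum.inl : Fin m → Fin m ⊕ Fin n) := by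
    intro i hi
    simp only [hs, Finset.mem_filter, Finset.mem_univ, true_and] at hi
    simp [f, hi]
  have hinj : Set.InjOn f s := by
    intro i hi j hj hfij
    simp only [hs, Finset.coe_filter, Set.mem_setOf_eq, Finset.mem_univ, true_and] at hi hj
    by_contra hij
    simp only [f, dif_pos hi, dif_pos hj, Sum.inl.injEq] at hfij
    have h1 := hi.choose_spec
    have h2 := hj.choose_spec
    rw [hfij] at h1
    exact absurd ((hdisj i j hij).le_bot (Finset.mem_inter.mpr ⟨h1, h2⟩)) (by simp)
  have hle : s.card ≤ m := by
    have := Finset.card_le_card_of_injOn f hmaps hinj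
    have him : (Finset.univ.image (Sum.inl : Fin m → Fin m ⊕ Fin n)).card = m := by
      rw [Finset.card_image_of_injective _ Sum.inl_injective, Finset.card_fin]
    omega
  omega
end
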